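/- Let φ(t) = (1/√(2π)) exp(−t²/2) be the standard normal density and Φ(x) = ∫_{−∞}^{x} φ(t) dt the standard normal cumulative distribution function, define h : ℝ → ℝ by h(x) = x·Φ(x) + φ(x), and for each natural number N ≥ 2 let z_N be the unique real root of g_N(z) = (N − 1)·h(z) + z, and set N′ = (N − 1)/√(2π). Then z_N + √(2·log N′) − 3·(log(log N′) + log 2)/(2·√(2·log N′)) tends to 0 as N → ∞. -/

import Mathlib

/-!
Write `A = √(2π) e^{a²/2}` with `a = √(2 log N′)`, so that `A φ(y) = exp ((a² - y²) / 2)`, and note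
that `x ↦ A h(x) + x` is strictly increasing, since `h' = Φ ≥ 0`. The Mills-ratio bounds
`φ(x) (-1/x + 1/x³) ≤ Φ(x) ≤ φ(x) (-1/x + 1/x³ - 3/x⁵)` for `x < 0` (each difference has a
derivative of constant sign and vanishes at `-∞`) give `φ(y) (y² - 3) / y⁴ ≤ h(-y) ≤ φ(y) / y²`.
Hence `A h(-y) < y` once `y ≥ a`, and `A h(-y) > y` once `3 log y + log 2 < (a² - y²) / 2`.
Since `log a = o(a)`, the first applies to `y = a - 3 log a / a + ε` and the second to
`y = a - 3 log a / a - ε`, which traps the root within `ε` of `-a + 3 log a / a`.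
-/

open Real Set Filter Topology

lemma nonneg_of_hasDerivAt_nonneg_of_tendsto_atBot {G G' : ℝ → ℝ} {b x : ℝ}
    (hG : ∀ y < b, HasDerivAt G (G' y) y) (hG' : ∀ y < b, 0 ≤ G' y)
    (hlim : Tendsto G atBot (𝓝 0)) (hx : x < b) : 0 ≤ G x := by
  have hmono : MonotoneOn G (Iio b) :=
    monotoneOn_of_hasDerivWithinAt_nonneg (convex_Iio b)
      (fun y hy => (hG y hy).continuousAt.continuousWithinAt)
      (fun y hy => (hG y (by simpa using hy)).hasDerivWithinAt)
      (fun y hy => hG' y (by simpa using hy))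
  refine le_of_tendsto hlim ?_
  filter_upwards [eventually_lt_atBot x] with y hy
  exact hmono (hy.trans hx) hx hy.le

namespace StdNormal

noncomputable def pdf (t : ℝ) : ℝ := (1 / √(2 * π)) * exp (-t ^ 2 / 2)

noncomputable def cdf (x : ℝ) : ℝ := ∫ t in Iic x, pdf t

/-- The expected-improvement profile `x ↦ 𝔼 (x - Z)⁺` with `Z ∼ 𝒩(0, 1)`. -/
noncomputable def ei (x : ℝ) : ℝ := x * cdf x + pdf x

lemma pdf_pos (t : ℝ) : 0 < pdf t := by
  unfold pdf
  positivity

lemma pdf_neg (t : ℝ) : pdf (-t) = pdf t := by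
  simp [pdf]

lemma continuous_pdf : Continuous pdf := by
  unfold pdf
  fun_prop

lemma integrable_pdf : MeasureTheory.Integrable pdf :=
  (ProbabilityTheory.integrable_gaussianPDFReal 0 1).congr <| .of_forall fun t => by
    simp [ProbabilityTheory.gaussianPDFReal, pdf]

lemma hasDerivAt_pdf (t : ℝ) : HasDerivAt pdf (-t * pdf t) t := by
  have h : HasDerivAt (fun s : ℝ => -s ^ 2 / 2) (-t) t :=
    (((hasDerivAt_pow 2 t).neg).div_const 2).congr_deriv (by ring)
  refine ((h.exp).const_mul (1 / √(2 * π))).congr_deriv ?_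
  unfold pdf
  ring

lemma tendsto_pdf_atBot : Tendsto pdf atBot (𝓝 0) := by
  have hsq : Tendsto (fun t : ℝ => -t ^ 2 / 2) atBot atBot := by
    have := (tendsto_id.atBot_mul_atBot₀ tendsto_id).atTop_div_const (two_pos (α := ℝ))
    simpa [sq, neg_div] using this
  have h := (tendsto_exp_atBot.comp hsq).const_mul (1 / √(2 * π))
  rw [mul_zero] at h
  exact h

lemma cdf_nonneg (x : ℝ) : 0 ≤ cdf x :=
  MeasureTheory.setIntegral_nonneg measurableSet_Iic fun t _ => (pdf_pos t).le

lemma tendsto_cdf_atBot : Tendsto cdf atBot (𝓝 0) :=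
  MeasureTheory.tendsto_integral_Iic_zero tendsto_id

lemma hasDerivAt_cdf (x : ℝ) : HasDerivAt cdf (pdf x) x := by
  have hcdf : cdf = fun y => cdf 0 + ∫ t in (0 : ℝ)..y, pdf t := by
    funext y
    rw [← intervalIntegral.integral_Iic_sub_Iic integrable_pdf.integrableOn
      integrable_pdf.integrableOn, cdf, cdf]
    ring
  rw [hcdf]
  exact (intervalIntegral.integral_hasDerivAt_right integrable_pdf.intervalIntegrable
    continuous_pdf.aestronglyMeasurable.stronglyMeasurableAtFilter
    continuous_pdf.continuousAt).const_add _

lemma pdf_mul_le_cdf {x : ℝ} (hx : x < 0) : pdf x * (-x⁻¹ + x⁻¹ ^ 3) ≤ cdf x := by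
  have hG : ∀ y < 0, HasDerivAt (fun y => cdf y - pdf y * (-y⁻¹ + y⁻¹ ^ 3))
      (3 * pdf y * y⁻¹ ^ 4) y := by
    intro y hy
    have hy0 : y ≠ 0 := hy.ne
    have hinv := hasDerivAt_inv hy0
    have hp : HasDerivAt (fun y => -y⁻¹ + y⁻¹ ^ 3)
        (-(-(y ^ 2)⁻¹) + 3 * y⁻¹ ^ 2 * (-(y ^ 2)⁻¹)) y :=
      hinv.neg.add (hinv.pow 3)
    refine ((hasDerivAt_cdf y).sub ((hasDerivAt_pdf y).mul hp)).congr_deriv ?_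
    field_simp
    ring
  have hlim : Tendsto (fun y => cdf y - pdf y * (-y⁻¹ + y⁻¹ ^ 3)) atBot (𝓝 0) := by
    have hinv : Tendsto (fun y : ℝ => y⁻¹) atBot (𝓝 0) := tendsto_inv_atBot_zero
    simpa using tendsto_cdf_atBot.sub (tendsto_pdf_atBot.mul (hinv.neg.add (hinv.pow 3)))
  have := nonneg_of_hasDerivAt_nonneg_of_tendsto_atBot hG
    (fun y _ => by have := pdf_pos y; positivity) hlim hx
  linarith

lemma cdf_le_pdf_mul {x : ℝ} (hx : x < 0) :
    cdf x ≤ pdf x * (-x⁻¹ + x⁻¹ ^ 3 - 3 * x⁻¹ ^ 5) := by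
  have hG : ∀ y < 0, HasDerivAt (fun y => pdf y * (-y⁻¹ + y⁻¹ ^ 3 - 3 * y⁻¹ ^ 5) - cdf y)
      (15 * pdf y * y⁻¹ ^ 6) y := by
    intro y hy
    have hy0 : y ≠ 0 := hy.ne
    have hinv := hasDerivAt_inv hy0
    have hp : HasDerivAt (fun y => -y⁻¹ + y⁻¹ ^ 3 - 3 * y⁻¹ ^ 5)
        (-(-(y ^ 2)⁻¹) + 3 * y⁻¹ ^ 2 * (-(y ^ 2)⁻¹) - 3 * (5 * y⁻¹ ^ 4 * (-(y ^ 2)⁻¹)))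
        y :=
      (hinv.neg.add (hinv.pow 3)).sub ((hinv.pow 5).const_mul 3)
    refine (((hasDerivAt_pdf y).mul hp).sub (hasDerivAt_cdf y)).congr_deriv ?_
    field_simp
    ring
  have hlim : Tendsto (fun y => pdf y * (-y⁻¹ + y⁻¹ ^ 3 - 3 * y⁻¹ ^ 5) - cdf y)
      atBot (𝓝 0) := by
    have hinv : Tendsto (fun y : ℝ => y⁻¹) atBot (𝓝 0) := tendsto_inv_atBot_zero
    simpa using (tendsto_pdf_atBot.mul ((hinv.neg.add (hinv.pow 3)).sub
      ((hinv.pow 5).const_mul 3))).sub tendsto_cdf_atBot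
  have := nonneg_of_hasDerivAt_nonneg_of_tendsto_atBot hG
    (fun y _ => by have := pdf_pos y; positivity) hlim hx
  linarith

lemma ei_le_pdf_div_sq {x : ℝ} (hx : x < 0) : ei x ≤ pdf x / x ^ 2 := by
  have hx0 := hx.ne
  have h := mul_le_mul_of_nonpos_left (pdf_mul_le_cdf hx) hx.le
  have e : x * (pdf x * (-x⁻¹ + x⁻¹ ^ 3)) = pdf x / x ^ 2 - pdf x := by
    field_simp
    ring
  unfold ei
  linarith

lemma pdf_mul_div_le_ei {x : ℝ} (hx : x < 0) : pdf x * (x ^ 2 - 3) / x ^ 4 ≤ ei x := by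
  have hx0 := hx.ne
  have h := mul_le_mul_of_nonpos_left (cdf_le_pdf_mul hx) hx.le
  have e : x * (pdf x * (-x⁻¹ + x⁻¹ ^ 3 - 3 * x⁻¹ ^ 5)) =
      pdf x * (x ^ 2 - 3) / x ^ 4 - pdf x := by
    field_simp
    ring
  unfold ei
  linarith

lemma hasDerivAt_ei (x : ℝ) : HasDerivAt ei (cdf x) x :=
  (((hasDerivAt_id x).mul (hasDerivAt_cdf x)).add (hasDerivAt_pdf x)).congr_deriv (by simp)

lemma strictMono_mul_ei_add {A : ℝ} (hA : 0 ≤ A) : StrictMono fun x => A * ei x + x :=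
  strictMono_of_hasDerivAt_pos (fun x => ((hasDerivAt_ei x).const_mul A).add (hasDerivAt_id x))
    fun x => by have := cdf_nonneg x; positivity

lemma sqrt_two_pi_mul_exp_mul_pdf (a y : ℝ) :
    √(2 * π) * exp (a ^ 2 / 2) * pdf y = exp ((a ^ 2 - y ^ 2) / 2) := by
  rw [pdf, sub_div, sub_eq_add_neg, exp_add, ← neg_div]
  field_simp

lemma sqrt_two_pi_mul_exp_mul_ei_neg_lt {a y : ℝ} (hy : 1 < y) (hay : a ^ 2 ≤ y ^ 2) :
    √(2 * π) * exp (a ^ 2 / 2) * ei (-y) < y := by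
  have hexp : exp ((a ^ 2 - y ^ 2) / 2) ≤ 1 := exp_le_one_iff.2 (by linarith)
  calc √(2 * π) * exp (a ^ 2 / 2) * ei (-y)
      ≤ √(2 * π) * exp (a ^ 2 / 2) * (pdf y / y ^ 2) := by
        gcongr
        simpa [pdf_neg] using ei_le_pdf_div_sq (neg_lt_zero.2 (by linarith : 0 < y))
    _ = exp ((a ^ 2 - y ^ 2) / 2) / y ^ 2 := by
        rw [← sqrt_two_pi_mul_exp_mul_pdf, mul_div_assoc]
    _ ≤ 1 / y ^ 2 := by gcongr
    _ < y := by
        rw [div_lt_iff₀ (by positivity)]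
        nlinarith

lemma lt_sqrt_two_pi_mul_exp_mul_ei_neg {a y : ℝ} (hy : 3 ≤ y)
    (h : 3 * log y + log 2 < (a ^ 2 - y ^ 2) / 2) :
    y < √(2 * π) * exp (a ^ 2 / 2) * ei (-y) := by
  have hexp : 2 * y ^ 3 < exp ((a ^ 2 - y ^ 2) / 2) := by
    calc 2 * y ^ 3 = exp (3 * log y + log 2) := by
          rw [exp_add, exp_log two_pos, ← log_rpow (by linarith), exp_log (by positivity)]
          norm_cast
          ring
      _ < _ := exp_lt_exp.2 h
  calc y ≤ 2 * y ^ 3 * (y ^ 2 - 3) / y ^ 4 := by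
        rw [le_div_iff₀ (by positivity)]
        have : 0 ≤ y ^ 3 * (y ^ 2 - 6) := mul_nonneg (by positivity) (by nlinarith)
        linarith
    _ < exp ((a ^ 2 - y ^ 2) / 2) * (y ^ 2 - 3) / y ^ 4 := by
        gcongr
        nlinarith
    _ = √(2 * π) * exp (a ^ 2 / 2) * (pdf y * (y ^ 2 - 3) / y ^ 4) := by
        rw [← sqrt_two_pi_mul_exp_mul_pdf]
        ring
    _ ≤ √(2 * π) * exp (a ^ 2 / 2) * ei (-y) := by
        gcongr
        simpa [pdf_neg, Even.neg_pow (by decide : Even 4)] using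
          pdf_mul_div_le_ei (neg_lt_zero.2 (by linarith : 0 < y))

lemma eventually_abs_root_add_sub_lt {ε : ℝ} (hε : 0 < ε) (hε1 : ε ≤ 1) :
    ∀ᶠ a in atTop, ∀ x, √(2 * π) * exp (a ^ 2 / 2) * ei x + x = 0 →
      |x + a - 3 * log a / a| < ε := by
  have hlog : (fun a => 3 * log a + 2 * log 2) =o[atTop] id :=
    (isLittleO_log_id_atTop.const_mul_left 3).add (Asymptotics.isLittleO_const_id_atTop _)
  filter_upwards [hlog.def (half_pos hε), eventually_ge_atTop 5] with a hlog_le ha x hx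
  have hloga : 0 ≤ log a := log_nonneg (by linarith)
  have hsmall : 3 * log a + 2 * log 2 ≤ ε / 2 * a := by
    simpa [abs_of_nonneg, hloga, (by linarith : (0 : ℝ) ≤ a)] using
      (le_abs_self _).trans hlog_le
  set c := 3 * log a / a with hc
  have hca : c * a = 3 * log a := by rw [hc]; field_simp
  have hc0 : 0 ≤ c := by positivity
  have hcε : c ≤ ε / 2 := by
    rw [hc, div_le_iff₀ (by linarith)]
    linarith [log_pos one_lt_two]
  have hmono := strictMono_mul_ei_add (by positivity : 0 ≤ √(2 * π) * exp (a ^ 2 / 2))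
  have hlower : -(a - c + ε) < x := by
    refine hmono.lt_iff_lt.1 ?_
    have := sqrt_two_pi_mul_exp_mul_ei_neg_lt (a := a) (y := a - c + ε) (by linarith)
      (pow_le_pow_left₀ (by linarith) (by linarith) 2)
    rw [hx]
    linarith
  have hupper : x < -(a - c - ε) := by
    refine hmono.lt_iff_lt.1 ?_
    set y := a - c - ε
    have hya : (c + ε) * a ≤ a ^ 2 - y ^ 2 := by nlinarith
    have hlogy : log y ≤ log a := log_le_log (by linarith) (by linarith)
    have := lt_sqrt_two_pi_mul_exp_mul_ei_neg (a := a) (y := y) (by linarith)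
      (by nlinarith [mul_pos hε (by linarith : (0 : ℝ) < a)])
    rw [hx]
    linarith
  rw [abs_lt]
  constructor <;> linarith

theorem tendsto_root_add_sub {ι : Type*} {l : Filter ι} {a x : ι → ℝ}
    (ha : Tendsto a l atTop)
    (hx : ∀ᶠ i in l, √(2 * π) * exp (a i ^ 2 / 2) * ei (x i) + x i = 0) :
    Tendsto (fun i => x i + a i - 3 * log (a i) / a i) l (𝓝 0) := by
  rw [Metric.tendsto_nhds]
  intro ε hε
  filter_upwards [ha.eventually (eventually_abs_root_add_sub_lt (lt_min hε one_pos)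
    (min_le_right _ _)), hx] with i hi hroot
  rw [Real.dist_0_eq_abs]
  exact (hi _ hroot).trans_le (min_le_left _ _)

end StdNormal

open StdNormal

theorem stmt_18 (φ Φ h : ℝ → ℝ)
    (hφ : ∀ t, φ t = (1 / Real.sqrt (2 * Real.pi)) * Real.exp (-t ^ 2 / 2))
    (hΦ : ∀ x, Φ x = ∫ t in Set.Iic x, φ t)
    (hh : ∀ x, h x = x * Φ x + φ x)
    (z : ℕ → ℝ)
    (hz : ∀ N : ℕ, 2 ≤ N → ((N : ℝ) - 1) * h (z N) + z N = 0)
    (N' : ℕ → ℝ) (hN' : ∀ N : ℕ, N' N = ((N : ℝ) - 1) / Real.sqrt (2 * Real.pi)) :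
    Tendsto (fun N : ℕ => z N + Real.sqrt (2 * Real.log (N' N)) -
        3 * (Real.log (Real.log (N' N)) + Real.log 2) /
          (2 * Real.sqrt (2 * Real.log (N' N)))) atTop (nhds 0) := by
  obtain rfl : φ = pdf := funext hφ
  obtain rfl : Φ = cdf := funext hΦ
  obtain rfl : h = ei := funext hh
  have hN'_top : Tendsto N' atTop atTop := by
    simp_rw [funext hN']
    exact (tendsto_atTop_add_const_right _ (-1) tendsto_natCast_atTop_atTop).atTop_div_const
      (by positivity)
  have hL : Tendsto (fun N => log (N' N)) atTop atTop := tendsto_log_atTop.comp hN'_top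
  refine (tendsto_root_add_sub (x := z)
    (tendsto_sqrt_atTop.comp (hL.const_mul_atTop two_pos)) ?_).congr' ?_
  · filter_upwards [eventually_ge_atTop 2, hN'_top.eventually_gt_atTop 1] with N hN hN'1
    have hlog : 0 ≤ log (N' N) := log_nonneg hN'1.le
    simp only [Function.comp_apply]
    rw [sq_sqrt (by positivity), mul_div_cancel_left₀ _ two_ne_zero, exp_log (by linarith),
      hN', mul_div_cancel₀ _ (by positivity)]
    exact hz N hN
  · filter_upwards [hN'_top.eventually_gt_atTop 1] with N hN'1
    have hlog : 0 < log (N' N) := log_pos hN'1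
    simp only [Function.comp_apply]
    rw [log_sqrt (by positivity), log_mul two_ne_zero hlog.ne']
    ring
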